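/- Let A and B be NFAs on the same finite state set Q with finite alphabets Σ_A and Σ_B, such that B ≤ A, i.e., for every symbol x ∈ Σ_B there is a symbol y ∈ Σ_A with δ_B(q,x) ⊆ δ_A(q,y) for all q ∈ Q. Then there exists a partition P of Σ_B with |P| ≤ |Σ_A| such that the partitional symbolic merge C of B along P (the NFA on Q with alphabet P and δ_C(q,p) = ⋃_{x∈p} δ_B(q,x)) satisfies B ≤ C ≤ A. Furthermore, if B is D3-directing and d₃(B) ≤ d₃(A) (with A D3-directing), then d₃(C) = d₃(B) = d₃(A). -/

import Mathlib

/-- Action of an NFA transition function on a subset of states along a word. -/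
def nfaRun {n m : ℕ} (δ : Fin n → Fin m → Finset (Fin n)) :
    Finset (Fin n) → List (Fin m) → Finset (Fin n)
  | S, [] => S
  | S, a :: w => nfaRun δ (S.biUnion fun q => δ q a) w

/-- The word `w` is D3-directing for the NFA `δ`:
the intersection `⋂_{q ∈ Q} q·w` is nonempty. -/
def nfaD3word {n m : ℕ} (δ : Fin n → Fin m → Finset (Fin n)) (w : List (Fin m)) : Prop :=
  ∃ r : Fin n, ∀ q : Fin n, r ∈ nfaRun δ {q} w

/-- `B ≤ A` for NFAs on the same state set: every symbol of `B` lies below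
some symbol of `A`. -/
def nfaLe {n m₁ m₂ : ℕ} (δ₁ : Fin n → Fin m₁ → Finset (Fin n))
    (δ₂ : Fin n → Fin m₂ → Finset (Fin n)) : Prop :=
  ∀ x, ∃ y, ∀ q, δ₁ q x ⊆ δ₂ q y

/-- The partitional symbolic merge of the NFA `δB` along the partition of its
alphabet given by the fibers of `f`: the symbols in each fiber are merged. -/
def nfaMerge {n mB k : ℕ} (δB : Fin n → Fin mB → Finset (Fin n))
    (f : Fin mB → Fin k) : Fin n → Fin k → Finset (Fin n) :=
  fun q p => (Finset.univ.filter fun x => f x = p).biUnion fun x => δB q x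

/-- The set of lengths of D3-directing words of an NFA; its infimum is d₃. -/
def d3Set {n m : ℕ} (δ : Fin n → Fin m → Finset (Fin n)) : Set ℕ :=
  {l | ∃ w, w.length = l ∧ nfaD3word δ w}

/-!
Pick for every symbol `x` of `B` a symbol `g x` of `A` above it and merge the symbols of `B`
with the same image under `g`; the merge `C` has at most `|Σ_A|` symbols and satisfies
`B ≤ C ≤ A`. Replacing symbols by larger ones only enlarges runs, so `≤` preserves directing
words together with their lengths and `d₃` is antitone: `d₃(A) ≤ d₃(C) ≤ d₃(B)`, which
together with `d₃(B) ≤ d₃(A)` forces equality.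
-/

lemma nfaRun_subset_nfaRun_map {n m₁ m₂ : ℕ} {δ₁ : Fin n → Fin m₁ → Finset (Fin n)}
    {δ₂ : Fin n → Fin m₂ → Finset (Fin n)} {g : Fin m₁ → Fin m₂}
    (hg : ∀ x q, δ₁ q x ⊆ δ₂ q (g x)) (w : List (Fin m₁)) {S T : Finset (Fin n)}
    (hST : S ⊆ T) : nfaRun δ₁ S w ⊆ nfaRun δ₂ T (w.map g) := by
  induction w generalizing S T with
  | nil => exact hST
  | cons a w ih =>
    exact ih ((Finset.biUnion_subset_biUnion_of_subset_left _ hST).trans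
      (Finset.biUnion_mono fun q _ => hg a q))

lemma d3Set_subset_of_nfaLe {n m₁ m₂ : ℕ} {δ₁ : Fin n → Fin m₁ → Finset (Fin n)}
    {δ₂ : Fin n → Fin m₂ → Finset (Fin n)} (hle : nfaLe δ₁ δ₂) : d3Set δ₁ ⊆ d3Set δ₂ := by
  choose g hg using hle
  rintro _ ⟨w, rfl, r, hr⟩
  exact ⟨w.map g, List.length_map g, r, fun q => nfaRun_subset_nfaRun_map hg w subset_rfl (hr q)⟩

lemma sInf_d3Set_le_of_nfaLe {n m₁ m₂ : ℕ} {δ₁ : Fin n → Fin m₁ → Finset (Fin n)}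
    {δ₂ : Fin n → Fin m₂ → Finset (Fin n)} (hle : nfaLe δ₁ δ₂) (hdir : ∃ w, nfaD3word δ₁ w) :
    sInf (d3Set δ₂) ≤ sInf (d3Set δ₁) :=
  let ⟨w, hw⟩ := hdir
  csInf_le_csInf (OrderBot.bddBelow _) ⟨w.length, w, rfl, hw⟩ (d3Set_subset_of_nfaLe hle)

lemma nfaD3word_exists_of_nfaLe {n m₁ m₂ : ℕ} {δ₁ : Fin n → Fin m₁ → Finset (Fin n)}
    {δ₂ : Fin n → Fin m₂ → Finset (Fin n)} (hle : nfaLe δ₁ δ₂) (hdir : ∃ w, nfaD3word δ₁ w) :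
    ∃ w, nfaD3word δ₂ w :=
  let ⟨w, hw⟩ := hdir
  let ⟨w', _, hw'⟩ := d3Set_subset_of_nfaLe hle ⟨w, rfl, hw⟩
  ⟨w', hw'⟩

lemma nfaLe_nfaMerge {n mB k : ℕ} (δB : Fin n → Fin mB → Finset (Fin n)) (f : Fin mB → Fin k) :
    nfaLe δB (nfaMerge δB f) :=
  fun x => ⟨f x, fun q => Finset.subset_biUnion_of_mem (fun x => δB q x) (by simp)⟩

lemma nfaMerge_nfaLe_of_factor {n mB mA k : ℕ} {δB : Fin n → Fin mB → Finset (Fin n)}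
    {δA : Fin n → Fin mA → Finset (Fin n)} {f : Fin mB → Fin k} {h : Fin k → Fin mA}
    (hle : ∀ x q, δB q x ⊆ δA q (h (f x))) : nfaLe (nfaMerge δB f) δA := by
  refine fun p => ⟨h p, fun q => Finset.biUnion_subset.2 fun x hx => ?_⟩
  rw [← (Finset.mem_filter.1 hx).2]
  exact hle x q

lemma Fin.exists_surjective_factorization {a b : ℕ} (g : Fin a → Fin b) :
    ∃ (k : ℕ) (f : Fin a → Fin k) (h : Fin k → Fin b),
      k ≤ b ∧ Function.Surjective f ∧ g = h ∘ f := by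
  let e := Fintype.equivFin (Set.range g)
  refine ⟨_, e ∘ Set.rangeFactorization g, Subtype.val ∘ e.symm,
    (Fintype.card_subtype_le _).trans_eq (Fintype.card_fin b),
    e.surjective.comp Set.rangeFactorization_surjective, ?_⟩
  ext x
  simp [Set.rangeFactorization]

theorem stmt18 (n mB mA : ℕ) (δB : Fin n → Fin mB → Finset (Fin n))
    (δA : Fin n → Fin mA → Finset (Fin n)) (hBA : nfaLe δB δA) :
    ∃ (k : ℕ) (f : Fin mB → Fin k),
      -- f is a partition of Σ_B into k nonempty classes, with k ≤ |Σ_A|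
      k ≤ mA ∧ Function.Surjective f ∧
      -- B ≤ C ≤ A for the partitional symbolic merge C of B along f
      nfaLe δB (nfaMerge δB f) ∧ nfaLe (nfaMerge δB f) δA ∧
      -- furthermore d₃(C) = d₃(B) = d₃(A) whenever d₃(B) ≤ d₃(A)
      ((∃ w, nfaD3word δB w) → (∃ w, nfaD3word δA w) →
        sInf (d3Set δB) ≤ sInf (d3Set δA) →
        sInf (d3Set (nfaMerge δB f)) = sInf (d3Set δB) ∧
          sInf (d3Set δB) = sInf (d3Set δA)) := by
  choose g hg using hBA
  obtain ⟨k, f, h, hk, hf, rfl⟩ := Fin.exists_surjective_factorization g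
  have hBC := nfaLe_nfaMerge δB f
  have hCA : nfaLe (nfaMerge δB f) δA := nfaMerge_nfaLe_of_factor hg
  refine ⟨k, f, hk, hf, hBC, hCA, fun hB _ hBleA => ?_⟩
  have hCleB := sInf_d3Set_le_of_nfaLe hBC hB
  have hAleC := sInf_d3Set_le_of_nfaLe hCA (nfaD3word_exists_of_nfaLe hBC hB)
  omega
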